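/- arXiv:1909.02936 — 2 statements merged into one kernel-verified Lean document; each statement's English description precedes it below -/
import Mathlib

section
/- Royden's lemma (general case): Let V be a complex inner product space and let S be a symmetric bihermitian form on V. Suppose there is a real constant K such that S(ζ,ζ,ζ,ζ) ≤ K‖ζ‖⁴ for every ζ ∈ V. Then for any finite family ζ₁,…,ζ_ν of pairwise orthogonal vectors in V, one has Σ_{α,β=1}^{ν} S(ζ_α, ζ_α, ζ_β, ζ_β) ≤ (K/2)·[ (Σ_{α=1}^{ν} ‖ζ_α‖²)² + Σ_{α=1}^{ν} ‖ζ_α‖⁴ ]. -/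
/-!
Rotate each `ζ α` by an independent `N`-th root of unity `ε α` (`N ≥ 3`) and average
`S Z Z Z Z` over all choices, where `Z = ∑ α, ε α • ζ α`. Orthogonality gives
`‖Z‖² = ∑ α, ‖ζ α‖²`, so the average is at most `K (∑ α, ‖ζ α‖²)²`. Expanding `S` in its four
arguments, the average of `ε a * conj (ε b) * ε c * conj (ε d)` is `1` when `{a, c} = {b, d}`
as multisets and `0` otherwise; together with `S u v v u = S u u v v` this makes the average
`2 ∑ α β, S (ζ α) (ζ α) (ζ β) (ζ β) - ∑ α, S (ζ α) (ζ α) (ζ α) (ζ α)`. The diagonal terms are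
at most `K ‖ζ α‖⁴`.
-/

open Finset ComplexConjugate
open ZMod (stdAddChar)

theorem Sym2.eq_iff_forall_add_eq {ι M : Type*} [AddCommGroup M] {x : M} (hx : x ≠ 0)
    (hx2 : x + x ≠ 0) {a b c d : ι} :
    s(a, c) = s(b, d) ↔ ∀ f : ι → M, f a + f c = f b + f d := by
  classical
  refine ⟨fun h f => ?_, fun h => Sym2.eq_iff.2 ?_⟩
  · rcases Sym2.eq_iff.1 h with ⟨rfl, rfl⟩ | ⟨rfl, rfl⟩
    · rfl
    · exact add_comm _ _
  by_cases hab : a = b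
  · subst hab
    refine .inl ⟨rfl, by_contra fun hcd => hx ?_⟩
    simpa [Pi.single_apply, Ne.symm hcd] using add_left_cancel (h (Pi.single c x))
  by_cases had : a = d
  · subst had
    refine .inr ⟨rfl, by_contra fun hcb => hx ?_⟩
    simpa [Pi.single_apply, Ne.symm hcb] using
      add_left_cancel ((h (Pi.single c x)).trans (add_comm _ _))
  · have := h (Pi.single a x)
    by_cases hca : c = a <;> simp_all [Ne.symm hab, Ne.symm had]

-- For `N = 2` the phases are real, and `a = c ∧ b = d` would contribute as well.
theorem sum_stdAddChar_mul_conj {ι : Type*} [Fintype ι] [DecidableEq ι] {N : ℕ} [NeZero N]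
    (hN : 2 < N) (a b c d : ι) :
    ∑ f : ι → ZMod N, stdAddChar (f a) * conj (stdAddChar (f b)) *
        (stdAddChar (f c) * conj (stdAddChar (f d))) =
      if s(a, c) = s(b, d) then (Fintype.card (ι → ZMod N) : ℂ) else 0 := by
  let φ : (ι → ZMod N) →+ ZMod N := Pi.evalAddMonoidHom (fun _ => ZMod N) a +
    Pi.evalAddMonoidHom _ c - Pi.evalAddMonoidHom _ b - Pi.evalAddMonoidHom _ d
  have hφ : s(a, c) = s(b, d) ↔ stdAddChar.compAddMonoidHom φ = 0 := by
    have h1 : (1 : ZMod N) ≠ 0 := by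
      exact_mod_cast (ZMod.natCast_eq_zero_iff 1 N).not.2
        (Nat.not_dvd_of_pos_of_lt one_pos (by omega))
    have h2 : (1 : ZMod N) + 1 ≠ 0 := by
      rw [one_add_one_eq_two]
      exact_mod_cast (ZMod.natCast_eq_zero_iff 2 N).not.2 (Nat.not_dvd_of_pos_of_lt two_pos hN)
    rw [Sym2.eq_iff_forall_add_eq h1 h2, AddChar.eq_zero_iff]
    refine forall_congr' fun f => ?_
    rw [AddChar.compAddMonoidHom_apply, ← (stdAddChar (N := N)).map_zero_eq_one,
      ZMod.injective_stdAddChar.eq_iff]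
    simp [φ, sub_eq_zero, sub_sub]
  have hsummand : ∀ f : ι → ZMod N, stdAddChar (f a) * conj (stdAddChar (f b)) *
      (stdAddChar (f c) * conj (stdAddChar (f d))) =
        stdAddChar.compAddMonoidHom φ f := by
    intro f
    simp only [← AddChar.map_neg_eq_conj, ← AddChar.map_add_eq_mul,
      AddChar.compAddMonoidHom_apply]
    congr 1
    simp only [φ, AddMonoidHom.sub_apply, AddMonoidHom.add_apply, Pi.evalAddMonoidHom_apply]
    abel
  simp_rw [hsummand, AddChar.sum_eq_ite, hφ]

theorem sum_ite_sym2_eq {ι M : Type*} [Fintype ι] [DecidableEq ι] [AddCommGroup M]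
    (g : ι → ι → ι → ι → M) :
    ∑ a, ∑ b, ∑ c, ∑ d, (if s(a, c) = s(b, d) then g a b c d else 0) =
      ∑ a, ∑ c, g a a c c + ∑ a, ∑ c, g a c c a - ∑ a, g a a a a := by
  have h : ∀ a b c d, (if s(a, c) = s(b, d) then g a b c d else 0) =
      (if a = b ∧ c = d then g a b c d else 0) + (if a = d ∧ c = b then g a b c d else 0) -
        (if (a = b ∧ c = d) ∧ (a = d ∧ c = b) then g a b c d else 0) := by
    intro a b c d
    simp only [Sym2.eq_iff]
    by_cases h₁ : a = b ∧ c = d <;> by_cases h₂ : a = d ∧ c = b <;> simp [h₁, h₂]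
  simp only [h, sum_add_distrib, sum_sub_distrib, ite_and, sum_ite_irrel, sum_ite_eq,
    sum_ite_eq', sum_const_zero, mem_univ, if_true]

theorem norm_sum_sq_of_pairwise_inner_eq_zero {𝕜 E ι : Type*} [RCLike 𝕜] [NormedAddCommGroup E]
    [InnerProductSpace 𝕜 E] [Fintype ι] {y : ι → E}
    (hy : Pairwise fun a b => inner 𝕜 (y a) (y b) = 0) :
    ‖∑ a, y a‖ ^ 2 = ∑ a, ‖y a‖ ^ 2 := by
  have h : (‖∑ a, y a‖ : 𝕜) ^ 2 = ∑ a, (‖y a‖ : 𝕜) ^ 2 := by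
    simp only [← inner_self_eq_norm_sq_to_K, sum_inner, inner_sum]
    exact sum_congr rfl fun a _ => Fintype.sum_eq_single a fun b hb => hy hb
  exact_mod_cast h

structure IsSymmBihermitian {V : Type*} [AddCommGroup V] [Module ℂ V]
    (S : V → V → V → V → ℂ) : Prop where
  isLinearMap_fst : ∀ η σ ω, IsLinearMap ℂ fun ζ => S ζ η σ ω
  isLinearMap_thd : ∀ ζ η ω, IsLinearMap ℂ fun σ => S ζ η σ ω
  map_add_snd : ∀ ζ σ ω η₁ η₂, S ζ (η₁ + η₂) σ ω = S ζ η₁ σ ω + S ζ η₂ σ ω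
  map_smul_snd : ∀ ζ σ ω (c : ℂ) η, S ζ (c • η) σ ω = conj c * S ζ η σ ω
  map_add_fth : ∀ ζ η σ ω₁ ω₂, S ζ η σ (ω₁ + ω₂) = S ζ η σ ω₁ + S ζ η σ ω₂
  map_smul_fth : ∀ ζ η σ (c : ℂ) ω, S ζ η σ (c • ω) = conj c * S ζ η σ ω
  symm : ∀ ζ η σ ω, S ζ η σ ω = S σ η ζ ω
  conj_apply : ∀ ζ η σ ω, S η ζ ω σ = conj (S ζ η σ ω)

noncomputable def phaseSum {V ι : Type*} [AddCommGroup V] [Module ℂ V] [Fintype ι] {N : ℕ}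
    [NeZero N] (x : ι → V) (f : ι → ZMod N) : V :=
  ∑ a, stdAddChar (f a) • x a

namespace IsSymmBihermitian

section

variable {V : Type*} [AddCommGroup V] [Module ℂ V] {S : V → V → V → V → ℂ}
  {ι : Type*} [Fintype ι]

theorem sum_smul_fst (hS : IsSymmBihermitian S) (u : ι → ℂ) (x : ι → V) (η σ ω : V) :
    S (∑ a, u a • x a) η σ ω = ∑ a, u a * S (x a) η σ ω :=
  (map_sum (IsLinearMap.mk' _ (hS.isLinearMap_fst η σ ω)) _ univ).trans <|
    sum_congr rfl fun a _ => (hS.isLinearMap_fst η σ ω).map_smul (u a) (x a)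

theorem sum_smul_snd (hS : IsSymmBihermitian S) (u : ι → ℂ) (x : ι → V) (ζ σ ω : V) :
    S ζ (∑ a, u a • x a) σ ω = ∑ a, conj (u a) * S ζ (x a) σ ω :=
  (map_sum (AddMonoidHom.mk' (S ζ · σ ω) (hS.map_add_snd ζ σ ω)) _ univ).trans <|
    sum_congr rfl fun a _ => hS.map_smul_snd ζ σ ω (u a) (x a)

theorem sum_smul_thd (hS : IsSymmBihermitian S) (u : ι → ℂ) (x : ι → V) (ζ η ω : V) :
    S ζ η (∑ a, u a • x a) ω = ∑ a, u a * S ζ η (x a) ω :=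
  (map_sum (IsLinearMap.mk' _ (hS.isLinearMap_thd ζ η ω)) _ univ).trans <|
    sum_congr rfl fun a _ => (hS.isLinearMap_thd ζ η ω).map_smul (u a) (x a)

theorem sum_smul_fth (hS : IsSymmBihermitian S) (u : ι → ℂ) (x : ι → V) (ζ η σ : V) :
    S ζ η σ (∑ a, u a • x a) = ∑ a, conj (u a) * S ζ η σ (x a) :=
  (map_sum (AddMonoidHom.mk' (S ζ η σ ·) (hS.map_add_fth ζ η σ)) _ univ).trans <|
    sum_congr rfl fun a _ => hS.map_smul_fth ζ η σ (u a) (x a)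

theorem apply_sum_smul (hS : IsSymmBihermitian S) (u : ι → ℂ) (x : ι → V) :
    S (∑ a, u a • x a) (∑ a, u a • x a) (∑ a, u a • x a) (∑ a, u a • x a) =
      ∑ a, ∑ b, ∑ c, ∑ d, u a * conj (u b) * (u c * conj (u d)) *
        S (x a) (x b) (x c) (x d) := by
  simp_rw [hS.sum_smul_fst, hS.sum_smul_snd, hS.sum_smul_thd, hS.sum_smul_fth, mul_sum]
  exact sum_congr rfl fun a _ => sum_congr rfl fun b _ => sum_congr rfl fun c _ =>
    sum_congr rfl fun d _ => by ring

theorem apply_flip (hS : IsSymmBihermitian S) (ζ η : V) : S ζ η η ζ = S ζ ζ η η := by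
  rw [hS.conj_apply η ζ ζ η, hS.symm η ζ ζ η, ← hS.conj_apply]

theorem sum_apply_phaseSum [DecidableEq ι] (hS : IsSymmBihermitian S) {N : ℕ} [NeZero N]
    (hN : 2 < N) (x : ι → V) :
    ∑ f : ι → ZMod N, S (phaseSum x f) (phaseSum x f) (phaseSum x f) (phaseSum x f) =
      Fintype.card (ι → ZMod N) •
        (2 * ∑ a, ∑ b, S (x a) (x a) (x b) (x b) - ∑ a, S (x a) (x a) (x a) (x a)) := by
  calc _ = ∑ f : ι → ZMod N, ∑ a, ∑ b, ∑ c, ∑ d,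
        stdAddChar (f a) * conj (stdAddChar (f b)) *
          (stdAddChar (f c) * conj (stdAddChar (f d))) * S (x a) (x b) (x c) (x d) := by
        simp only [phaseSum, hS.apply_sum_smul]
    _ = ∑ a, ∑ b, ∑ c, ∑ d, (∑ f : ι → ZMod N,
        stdAddChar (f a) * conj (stdAddChar (f b)) *
          (stdAddChar (f c) * conj (stdAddChar (f d)))) * S (x a) (x b) (x c) (x d) := by
        simp only [sum_mul]
        rw [sum_comm]; refine sum_congr rfl fun a _ => ?_
        rw [sum_comm]; refine sum_congr rfl fun b _ => ?_
        rw [sum_comm]; refine sum_congr rfl fun c _ => ?_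
        rw [sum_comm]
    _ = ∑ a, ∑ b, ∑ c, ∑ d, if s(a, c) = s(b, d) then
          Fintype.card (ι → ZMod N) • S (x a) (x b) (x c) (x d) else 0 := by
        simp only [sum_stdAddChar_mul_conj hN, ite_mul, zero_mul, nsmul_eq_mul]
    _ = _ := by
        rw [sum_ite_sym2_eq]
        simp only [hS.apply_flip, ← smul_sum, ← smul_add, ← smul_sub, two_mul]

end

theorem two_mul_re_sum_sub_le {V ι : Type*} [NormedAddCommGroup V] [InnerProductSpace ℂ V]
    [Fintype ι] {S : V → V → V → V → ℂ} (hS : IsSymmBihermitian S) {K : ℝ}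
    (hK : ∀ z, (S z z z z).re ≤ K * ‖z‖ ^ 4) {x : ι → V}
    (hx : Pairwise fun a b => inner ℂ (x a) (x b) = 0) :
    2 * (∑ a, ∑ b, S (x a) (x a) (x b) (x b)).re - (∑ a, S (x a) (x a) (x a) (x a)).re ≤
      K * (∑ a, ‖x a‖ ^ 2) ^ 2 := by
  classical
  have hnorm (f : ι → ZMod 4) : ‖phaseSum x f‖ ^ 2 = ∑ a, ‖x a‖ ^ 2 := by
    rw [phaseSum, norm_sum_sq_of_pairwise_inner_eq_zero (𝕜 := ℂ)]
    · simp [norm_smul, AddChar.norm_apply]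
    · intro a b hab
      simp [inner_smul_left, inner_smul_right, hx hab]
  have hsum := sum_le_card_nsmul univ
    (fun f : ι → ZMod 4 => (S (phaseSum x f) (phaseSum x f) (phaseSum x f) (phaseSum x f)).re)
    (K * (∑ a, ‖x a‖ ^ 2) ^ 2) fun f _ => by
      simpa [← hnorm f, ← pow_mul] using hK (phaseSum x f)
  rw [← Complex.re_sum, hS.sum_apply_phaseSum (by norm_num) x, Complex.re_nsmul, card_univ]
    at hsum
  simpa using le_of_nsmul_le_nsmul_right Fintype.card_ne_zero hsum

end IsSymmBihermitian

/-- **Royden's lemma (general case).**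
Let `V` be a complex inner product space and `S` a symmetric bihermitian form on `V`,
i.e. `S` is `ℂ`-linear in the first and third arguments, conjugate-linear in the
second and fourth arguments, satisfies `S ζ η σ ω = S σ η ζ ω` and
`S η ζ ω σ = conj (S ζ η σ ω)`.  If `S(ζ,ζ,ζ,ζ) ≤ K ‖ζ‖⁴` for all `ζ`, then for any
finite family of pairwise orthogonal vectors `ζ₁, …, ζ_ν` one has
`∑_{α,β} S(ζ_α, ζ_α, ζ_β, ζ_β) ≤ (K/2) ((∑_α ‖ζ_α‖²)² + ∑_α ‖ζ_α‖⁴)`. -/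
theorem royden_lemma_general
    {V : Type*} [NormedAddCommGroup V] [InnerProductSpace ℂ V]
    (S : V → V → V → V → ℂ) (K : ℝ)
    (hlin1 : ∀ η σ ω, IsLinearMap ℂ fun ζ => S ζ η σ ω)
    (hlin3 : ∀ ζ η ω, IsLinearMap ℂ fun σ => S ζ η σ ω)
    (hadd2 : ∀ ζ σ ω η₁ η₂, S ζ (η₁ + η₂) σ ω = S ζ η₁ σ ω + S ζ η₂ σ ω)
    (hsmul2 : ∀ ζ σ ω (c : ℂ) η, S ζ (c • η) σ ω = starRingEnd ℂ c * S ζ η σ ω)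
    (hadd4 : ∀ ζ η σ ω₁ ω₂, S ζ η σ (ω₁ + ω₂) = S ζ η σ ω₁ + S ζ η σ ω₂)
    (hsmul4 : ∀ ζ η σ (c : ℂ) ω, S ζ η σ (c • ω) = starRingEnd ℂ c * S ζ η σ ω)
    (hsym : ∀ ζ η σ ω, S ζ η σ ω = S σ η ζ ω)
    (hherm : ∀ ζ η σ ω, S η ζ ω σ = starRingEnd ℂ (S ζ η σ ω))
    (hbound : ∀ ζ : V, (S ζ ζ ζ ζ).re ≤ K * ‖ζ‖ ^ 4)
    (ν : ℕ) (ζ : Fin ν → V)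
    (horth : ∀ α β, α ≠ β → (inner ℂ (ζ α) (ζ β) : ℂ) = 0) :
    (∑ α, ∑ β, S (ζ α) (ζ α) (ζ β) (ζ β)).re ≤
      K / 2 * ((∑ α, ‖ζ α‖ ^ 2) ^ 2 + ∑ α, ‖ζ α‖ ^ 4) := by
  have hS : IsSymmBihermitian S :=
    ⟨hlin1, hlin3, hadd2, hsmul2, hadd4, hsmul4, hsym, hherm⟩
  have hdiag : (∑ α, S (ζ α) (ζ α) (ζ α) (ζ α)).re ≤ K * ∑ α, ‖ζ α‖ ^ 4 := by
    rw [Complex.re_sum, mul_sum]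
    exact sum_le_sum fun α _ => hbound (ζ α)
  linarith [hS.two_mul_re_sum_sub_le hbound horth]
end

section
/- Lower bound for the residual trace under composition with a linear isomorphism: Let U, V, W be finite-dimensional real inner product spaces, A : U → V a linear map, and B : V → W a linear isomorphism whose smallest eigenvalue of BᵗB is μ_m > 0 (equivalently μ_m = 1/‖B⁻¹‖_op²). Then tr((BA)ᵗ(BA)) − ‖BA‖_op² ≥ μ_m·( tr(AᵗA) − ‖A‖_op² ). -/
open ContinuousLinearMap in
lemma trace_adjoint_comp_self_eq_sum
    {U V : Type*}
    [NormedAddCommGroup U] [InnerProductSpace ℝ U] [FiniteDimensional ℝ U]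
    [NormedAddCommGroup V] [InnerProductSpace ℝ V] [FiniteDimensional ℝ V]
    {ι : Type*} [Fintype ι] [DecidableEq ι]
    (T : U →L[ℝ] V) (b : OrthonormalBasis ι ℝ U) :
    LinearMap.trace ℝ U (ContinuousLinearMap.adjoint T ∘L T).toLinearMap =
      ∑ i, ‖T (b i)‖ ^ 2 := by
  rw [LinearMap.trace_eq_matrix_trace ℝ b.toBasis]
  rw [Matrix.trace]
  refine Finset.sum_congr rfl fun i _ => ?_
  rw [Matrix.diag]
  rw [LinearMap.toMatrix_apply]
  rw [b.coe_toBasis_repr_apply, b.coe_toBasis, b.repr_apply_apply]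
  simp only [ContinuousLinearMap.coe_coe, ContinuousLinearMap.comp_apply]
  rw [ContinuousLinearMap.adjoint_inner_right]
  rw [real_inner_self_eq_norm_sq]

lemma exists_unit_norm_achieving
    {U V : Type*}
    [NormedAddCommGroup U] [InnerProductSpace ℝ U] [FiniteDimensional ℝ U]
    [NormedAddCommGroup V] [InnerProductSpace ℝ V] [Nontrivial U]
    (T : U →L[ℝ] V) : ∃ u : U, ‖u‖ = 1 ∧ ‖T u‖ = ‖T‖ := by
  have hne : (Metric.sphere (0 : U) 1).Nonempty := by
    obtain ⟨x, hx⟩ := exists_ne (0 : U)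
    exact ⟨(1 / ‖x‖) • x, by
      simp [norm_smul, norm_ne_zero_iff.mpr hx, div_mul_cancel₀]⟩
  have hc : IsCompact (Metric.sphere (0 : U) 1) := isCompact_sphere 0 1
  obtain ⟨u, hu, hmax⟩ := hc.exists_isMaxOn hne
    (Continuous.continuousOn (by continuity : Continuous fun x : U => ‖T x‖))
  have hu1 : ‖u‖ = 1 := by simpa using hu
  refine ⟨u, hu1, le_antisymm (by simpa [hu1] using T.le_opNorm u) ?_⟩
  refine T.opNorm_le_bound (norm_nonneg _) fun x => ?_
  rcases eq_or_ne x 0 with rfl | hx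
  · simp
  · have hxs : (1 / ‖x‖) • x ∈ Metric.sphere (0 : U) 1 := by
      simp [norm_smul, norm_ne_zero_iff.mpr hx, div_mul_cancel₀]
    have : ‖T ((1 / ‖x‖) • x)‖ ≤ ‖T u‖ := hmax hxs
    rw [map_smul, norm_smul, Real.norm_eq_abs, abs_of_nonneg (by positivity)] at this
    have hxn : (0 : ℝ) < ‖x‖ := norm_pos_iff.mpr hx
    calc ‖T x‖ = (1 / ‖x‖ * ‖T x‖) * ‖x‖ := by field_simp
    _ ≤ ‖T u‖ * ‖x‖ := by
        apply mul_le_mul_of_nonneg_right _ (norm_nonneg x)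
        simpa using this

/-- **Lower bound for the residual trace under composition with a linear isomorphism.**
Let `U, V, W` be finite-dimensional real inner product spaces, `A : U → V` a linear
map and `B : V ≃ W` a linear isomorphism, whose smallest eigenvalue of `BᵗB` is
`μ_m = 1/‖B⁻¹‖² > 0`.  Then
`tr((BA)ᵗ(BA)) − ‖BA‖² ≥ μ_m (tr(AᵗA) − ‖A‖²)`. -/
theorem residual_trace_lower_bound_comp_isomorphism
    {U V W : Type*}
    [NormedAddCommGroup U] [InnerProductSpace ℝ U] [FiniteDimensional ℝ U]
    [NormedAddCommGroup V] [InnerProductSpace ℝ V] [FiniteDimensional ℝ V]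
    [NormedAddCommGroup W] [InnerProductSpace ℝ W] [FiniteDimensional ℝ W]
    (A : U →L[ℝ] V) (B : V ≃L[ℝ] W)
    (μm : ℝ) (hμ : μm = 1 / ‖(B.symm : W →L[ℝ] V)‖ ^ 2) (hμpos : 0 < μm) :
    μm * (LinearMap.trace ℝ U (ContinuousLinearMap.adjoint A ∘L A).toLinearMap - ‖A‖ ^ 2) ≤
      LinearMap.trace ℝ U
          (ContinuousLinearMap.adjoint ((B : V →L[ℝ] W) ∘L A) ∘L
            ((B : V →L[ℝ] W) ∘L A)).toLinearMap -
        ‖(B : V →L[ℝ] W) ∘L A‖ ^ 2 := by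
  -- key estimate : μm * ‖y‖^2 ≤ ‖B y‖^2
  have hBs : ‖(B.symm : W →L[ℝ] V)‖ ≠ 0 := by
    intro h
    rw [h] at hμ
    simp at hμ
    exact absurd hμ hμpos.ne'
  have key : ∀ y : V, μm * ‖y‖ ^ 2 ≤ ‖B y‖ ^ 2 := by
    intro y
    have h1 : ‖y‖ ≤ ‖(B.symm : W →L[ℝ] V)‖ * ‖B y‖ := by
      have := (B.symm : W →L[ℝ] V).le_opNorm (B y)
      simpa using this
    have h2 : ‖y‖ ^ 2 ≤ ‖(B.symm : W →L[ℝ] V)‖ ^ 2 * ‖B y‖ ^ 2 := by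
      rw [← mul_pow]
      exact pow_le_pow_left₀ (norm_nonneg y) h1 2
    rw [hμ]
    rw [div_mul_eq_mul_div, one_mul, div_le_iff₀ (by positivity)]
    linarith [h2]
  classical
  rcases subsingleton_or_nontrivial U with hU | hU
  · have hA : A = 0 := Subsingleton.elim A 0
    subst hA
    simp
  · set C := (B : V →L[ℝ] W) ∘L A with hC
    obtain ⟨u, hu1, hmax⟩ := exists_unit_norm_achieving C
    have horth : Orthonormal ℝ ((↑) : ({u} : Set U) → U) := by
      rw [orthonormal_subtype_iff_ite]
      intro v hv w hw
      simp only [Set.mem_singleton_iff] at hv hw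
      subst hv; subst hw
      simp [real_inner_self_eq_norm_sq, hu1]
    obtain ⟨s, b, hsub, hb⟩ := horth.exists_orthonormalBasis_extension
    have hus : u ∈ s := hsub rfl
    set i₀ : s := ⟨u, hus⟩ with hi₀
    have hbi₀ : b i₀ = u := by rw [hb]
    rw [trace_adjoint_comp_self_eq_sum A b, trace_adjoint_comp_self_eq_sum C b]
    have hCnorm : ‖C‖ ^ 2 = ‖C (b i₀)‖ ^ 2 := by rw [hbi₀, hmax]
    rw [hCnorm]
    have hsplitC : ∑ i, ‖C (b i)‖ ^ 2 - ‖C (b i₀)‖ ^ 2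
        = ∑ i ∈ Finset.univ.erase i₀, ‖C (b i)‖ ^ 2 := by
      rw [← Finset.sum_erase_add _ _ (Finset.mem_univ i₀)]
      ring
    have hsplitA : ∑ i, ‖A (b i)‖ ^ 2 - ‖A (b i₀)‖ ^ 2
        = ∑ i ∈ Finset.univ.erase i₀, ‖A (b i)‖ ^ 2 := by
      rw [← Finset.sum_erase_add _ _ (Finset.mem_univ i₀)]
      ring
    have hAbound : ‖A (b i₀)‖ ^ 2 ≤ ‖A‖ ^ 2 := by
      have h := A.le_opNorm (b i₀)
      rw [hbi₀, hu1, mul_one] at h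
      rw [hbi₀]
      exact pow_le_pow_left₀ (norm_nonneg _) h 2
    have step1 : μm * (∑ i, ‖A (b i)‖ ^ 2 - ‖A‖ ^ 2)
        ≤ μm * (∑ i, ‖A (b i)‖ ^ 2 - ‖A (b i₀)‖ ^ 2) := by
      apply mul_le_mul_of_nonneg_left _ hμpos.le
      linarith
    refine step1.trans ?_
    rw [hsplitA, hsplitC, Finset.mul_sum]
    apply Finset.sum_le_sum
    intro i _
    have : C (b i) = B (A (b i)) := rfl
    rw [this]
    exact key (A (b i))
end
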